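/- If ψ ∈ B varies regularly of index θ at infinity with 0 < θ < 1 (i.e., ψ(λr)/ψ(r) → λ^θ as r → ∞ for every λ > 0), then ψ is pseudoconcave in a neighbourhood of infinity: there is a concave positive function ψ₁(r) defined for r ≫ 1 such that both ψ/ψ₁ and ψ₁/ψ are bounded on some neighbourhood of ∞. -/

import Mathlib

/-!
Uniform convergence of `ψ(λr)/ψ(r)` on compact sets of `λ` (via Egorov's theorem) makes `ψ(ur)`
comparable to `ψ(r)` uniformly in `u ∈ [1, 2]` for large `r`. Since `ψ(2r)/ψ(r) → 2^θ ∈ (1, 2)`,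
the values `b n = ψ(r₀ 2ⁿ)` grow by ratios in a small window around `2^θ`, so the increments
`b (n + 1) - b n` at most double while the dyadic gaps double exactly: the slopes of the polygon
through the points `(r₀ 2ⁿ, b n)` decrease, so that polygon is concave, and it is comparable to `ψ`
by the first step.
-/

open Filter Set

section

variable {𝕜 E β ι : Type*} [Semiring 𝕜] [PartialOrder 𝕜] [AddCommMonoid E] [SMul 𝕜 E]
  [AddCommMonoid β] [PartialOrder β] [IsOrderedAddMonoid β] [Module 𝕜 β] [PosSMulMono 𝕜 β]

theorem concaveOn_of_forall_le_of_exists_eq [Nonempty ι] {s : Set E} {f : E → β}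
    {g : ι → E → β} (hg : ∀ i, ConcaveOn 𝕜 s (g i)) (hle : ∀ i, ∀ x ∈ s, f x ≤ g i x)
    (heq : ∀ x ∈ s, ∃ i, f x = g i x) : ConcaveOn 𝕜 s f := by
  refine ⟨(hg (Classical.arbitrary ι)).1, fun p hp q hq a c ha hc hac => ?_⟩
  have hz : a • p + c • q ∈ s := (hg (Classical.arbitrary ι)).1 hp hq ha hc hac
  obtain ⟨i, hi⟩ := heq _ hz
  calc a • f p + c • f q ≤ a • g i p + c • g i q := by
        gcongr
        · exact hle i p hp
        · exact hle i q hq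
    _ ≤ g i (a • p + c • q) := (hg i).2 hp hq ha hc hac
    _ = f (a • p + c • q) := hi.symm

end

theorem exists_le_lt_succ_of_tendsto_atTop {α : Type*} [LinearOrder α] [NoMaxOrder α]
    {x : ℕ → α} (htop : Tendsto x atTop atTop) {r : α} (hr : x 0 ≤ r) :
    ∃ k, x k ≤ r ∧ r < x (k + 1) := by
  classical
  have hex : ∃ n, r < x n := (htop.eventually_gt_atTop r).exists
  have hpos : Nat.find hex ≠ 0 := fun h => (Nat.find_spec hex).not_ge (h ▸ hr)
  obtain ⟨k, hk⟩ := Nat.exists_eq_succ_of_ne_zero hpos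
  refine ⟨k, not_lt.1 (Nat.find_min hex (by omega)), ?_⟩
  simpa [hk] using Nat.find_spec hex

noncomputable section Chord

variable (x b : ℕ → ℝ)

def chordSlope (n : ℕ) : ℝ := (b (n + 1) - b n) / (x (n + 1) - x n)

def chord (n : ℕ) (r : ℝ) : ℝ := b n + chordSlope x b n * (r - x n)

/-- When `x` is strictly increasing and the slopes decrease, this is, on `[x 0, ∞)`, the polygonal
interpolation of the points `(x n, b n)`. -/
def chordEnvelope (r : ℝ) : ℝ := ⨅ n, chord x b n r

variable {x b}

theorem concaveOn_chord (n : ℕ) : ConcaveOn ℝ univ (chord x b n) :=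
  ⟨convex_univ, fun p _ q _ a c _ _ hac => le_of_eq (by
    simp only [chord, smul_eq_mul]
    linear_combination (b n - chordSlope x b n * x n) * hac)⟩

variable (hx : StrictMono x)
include hx

theorem chord_eq_of_succ (n : ℕ) (r : ℝ) :
    chord x b n r = b (n + 1) + chordSlope x b n * (r - x (n + 1)) := by
  have : x (n + 1) - x n ≠ 0 := (sub_pos.2 (hx n.lt_succ_self)).ne'
  simp only [chord, chordSlope]
  field_simp
  ring

theorem chord_succ_sub_chord (n : ℕ) (r : ℝ) :
    chord x b (n + 1) r - chord x b n r =
      (chordSlope x b (n + 1) - chordSlope x b n) * (r - x (n + 1)) := by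
  rw [chord_eq_of_succ hx n r, chord]
  ring

variable (hs : Antitone (chordSlope x b))
include hs

theorem chord_le_chord_of_le {k m : ℕ} {r : ℝ} (hkm : k ≤ m) (hr : r ≤ x (k + 1)) :
    chord x b k r ≤ chord x b m r := by
  induction m, hkm using Nat.le_induction with
  | base => exact le_rfl
  | succ m hkm ih =>
    have hrm : r ≤ x (m + 1) := hr.trans (hx.monotone (by omega))
    have := chord_succ_sub_chord (b := b) hx m r
    nlinarith [hs m.le_succ]

theorem chord_le_chord_of_ge {k m : ℕ} {r : ℝ} (hmk : m ≤ k) (hr : x k ≤ r) :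
    chord x b k r ≤ chord x b m r := by
  induction k, hmk using Nat.le_induction with
  | base => exact le_rfl
  | succ k hmk ih =>
    have hrk : x k ≤ r := (hx.monotone k.le_succ).trans hr
    have := chord_succ_sub_chord (b := b) hx k r
    nlinarith [hs k.le_succ, ih hrk]

theorem chord_le_chord {k : ℕ} {r : ℝ} (h₁ : x k ≤ r) (h₂ : r ≤ x (k + 1)) (m : ℕ) :
    chord x b k r ≤ chord x b m r :=
  (le_total k m).elim (chord_le_chord_of_le hx hs · h₂) (chord_le_chord_of_ge hx hs · h₁)

theorem chordEnvelope_eq_chord {k : ℕ} {r : ℝ} (h₁ : x k ≤ r) (h₂ : r ≤ x (k + 1)) :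
    chordEnvelope x b r = chord x b k r := by
  have hmin := chord_le_chord hx hs h₁ h₂
  exact le_antisymm (ciInf_le ⟨_, forall_mem_range.2 hmin⟩ k) (le_ciInf hmin)

variable (htop : Tendsto x atTop atTop)
include htop

theorem exists_chordEnvelope_eq {r : ℝ} (hr : x 0 ≤ r) :
    ∃ k, x k ≤ r ∧ r ≤ x (k + 1) ∧ chordEnvelope x b r = chord x b k r := by
  obtain ⟨k, h₁, h₂⟩ := exists_le_lt_succ_of_tendsto_atTop htop hr
  exact ⟨k, h₁, h₂.le, chordEnvelope_eq_chord hx hs h₁ h₂.le⟩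

theorem chordEnvelope_mem_Icc (hb : Monotone b) {r : ℝ} (hr : x 0 ≤ r) :
    ∃ k, x k ≤ r ∧ r ≤ x (k + 1) ∧ chordEnvelope x b r ∈ Icc (b k) (b (k + 1)) := by
  obtain ⟨k, h₁, h₂, hk⟩ := exists_chordEnvelope_eq hx hs htop hr
  have hslope : 0 ≤ chordSlope x b k :=
    div_nonneg (sub_nonneg.2 (hb k.le_succ)) (sub_nonneg.2 (hx.monotone k.le_succ))
  refine ⟨k, h₁, h₂, ?_, ?_⟩ <;> rw [hk]
  · exact le_add_of_nonneg_right (mul_nonneg hslope (sub_nonneg.2 h₁))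
  · rw [chord_eq_of_succ hx]
    exact add_le_of_nonpos_right (mul_nonpos_of_nonneg_of_nonpos hslope (sub_nonpos.2 h₂))

theorem concaveOn_chordEnvelope : ConcaveOn ℝ (Ici (x 0)) (chordEnvelope x b) := by
  refine concaveOn_of_forall_le_of_exists_eq (g := chord x b)
    (fun n => (concaveOn_chord n).subset (subset_univ _) (convex_Ici _)) ?_ ?_
  · intro n r hr
    obtain ⟨k, h₁, h₂, hk⟩ := exists_chordEnvelope_eq hx hs htop hr
    exact hk ▸ chord_le_chord hx hs h₁ h₂ n
  · intro r hr
    obtain ⟨k, -, -, hk⟩ := exists_chordEnvelope_eq hx hs htop hr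
    exact ⟨k, hk⟩

end Chord

section TwoPow

variable {r₀ : ℝ} (hr₀ : 0 < r₀)
include hr₀

theorem strictMono_mul_two_pow : StrictMono fun n : ℕ => r₀ * 2 ^ n :=
  fun _ _ h => mul_lt_mul_of_pos_left (pow_lt_pow_right₀ one_lt_two h) hr₀

theorem tendsto_mul_two_pow_atTop : Tendsto (fun n : ℕ => r₀ * 2 ^ n) atTop atTop :=
  (tendsto_pow_atTop_atTop_of_one_lt one_lt_two).const_mul_atTop hr₀

variable {c₁ c₂ : ℝ} {b : ℕ → ℝ} (hb : ∀ n, 0 < b n) (hc₁ : 1 < c₁)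
  (hc : c₁ * (c₂ - 1) ≤ 2 * (c₁ - 1))
  (hgrowth : ∀ n, c₁ * b n ≤ b (n + 1) ∧ b (n + 1) ≤ c₂ * b n)
include hb hc₁ hc hgrowth

theorem antitone_chordSlope_two_pow : Antitone (chordSlope (fun n => r₀ * 2 ^ n) b) := by
  refine antitone_nat_of_succ_le fun n => ?_
  have hinc : b (n + 2) - b (n + 1) ≤ 2 * (b (n + 1) - b n) := by
    nlinarith [hgrowth n, hgrowth (n + 1), hb n, hb (n + 1)]
  have hx : ∀ n : ℕ, r₀ * 2 ^ (n + 1) - r₀ * 2 ^ n = r₀ * 2 ^ n := fun n => by ring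
  simp only [chordSlope, hx]
  rw [div_le_div_iff₀ (by positivity) (by positivity), pow_succ]
  nlinarith [mul_pos hr₀ (pow_pos (two_pos : (0 : ℝ) < 2) n)]

theorem concaveOn_chordEnvelope_two_pow :
    ConcaveOn ℝ (Ici r₀) (chordEnvelope (fun n => r₀ * 2 ^ n) b) := by
  simpa using concaveOn_chordEnvelope (strictMono_mul_two_pow hr₀)
    (antitone_chordSlope_two_pow hr₀ hb hc₁ hc hgrowth) (tendsto_mul_two_pow_atTop hr₀)

theorem exists_chordEnvelope_two_pow_mem_Icc {r : ℝ} (hr : r₀ ≤ r) :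
    ∃ k, r₀ * 2 ^ k ≤ r ∧ r ≤ 2 * (r₀ * 2 ^ k) ∧
      chordEnvelope (fun n => r₀ * 2 ^ n) b r ∈ Icc (b k) (c₂ * b k) := by
  have hbmono : Monotone b := monotone_nat_of_le_succ fun n => by
    nlinarith [hgrowth n, hb n]
  obtain ⟨k, h₁, h₂, hk₁, hk₂⟩ := chordEnvelope_mem_Icc (strictMono_mul_two_pow hr₀)
    (antitone_chordSlope_two_pow hr₀ hb hc₁ hc hgrowth) (tendsto_mul_two_pow_atTop hr₀) hbmono
    (r := r) (by simpa using hr)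
  exact ⟨k, h₁, by simpa only [pow_succ, mul_comm, mul_left_comm] using h₂, hk₁,
    hk₂.trans (hgrowth k).2⟩

end TwoPow

theorem exists_concaveOn_comparable_of_growth {ψ : ℝ → ℝ} {r₀ C c₁ c₂ : ℝ} (hr₀ : 0 < r₀)
    (hpos : ∀ r, r₀ ≤ r → 0 < ψ r)
    (hcomp : ∀ r, r₀ ≤ r → ∀ u ∈ Icc (1 : ℝ) 2, ψ (u * r) ≤ C * ψ r ∧ ψ r ≤ C * ψ (u * r))
    (hc₁ : 1 < c₁) (hc : c₁ * (c₂ - 1) ≤ 2 * (c₁ - 1))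
    (hgrowth : ∀ r, r₀ ≤ r → c₁ * ψ r ≤ ψ (2 * r) ∧ ψ (2 * r) ≤ c₂ * ψ r) :
    ∃ ψ₁ : ℝ → ℝ, (∀ r, r₀ ≤ r → 0 < ψ₁ r) ∧ ConcaveOn ℝ (Ici r₀) ψ₁ ∧
      ∃ K, 0 < K ∧ ∀ r, r₀ ≤ r → ψ r / ψ₁ r ≤ K ∧ ψ₁ r / ψ r ≤ K := by
  set b : ℕ → ℝ := fun n => ψ (r₀ * 2 ^ n)
  have hr₀b : ∀ n : ℕ, r₀ ≤ r₀ * 2 ^ n := fun n =>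
    le_mul_of_one_le_right hr₀.le (one_le_pow₀ one_le_two)
  have hb : ∀ n, 0 < b n := fun n => hpos _ (hr₀b n)
  have hbgrowth : ∀ n, c₁ * b n ≤ b (n + 1) ∧ b (n + 1) ≤ c₂ * b n := fun n => by
    simpa only [b, pow_succ, mul_comm, mul_left_comm] using hgrowth _ (hr₀b n)
  have hc₂ : 1 ≤ c₂ := by nlinarith [hbgrowth 0, hb 0]
  have hC : 1 ≤ C := by
    have := (hcomp r₀ le_rfl 1 ⟨le_rfl, one_le_two⟩).1
    rw [one_mul] at this
    exact (le_mul_iff_one_le_left (hpos r₀ le_rfl)).1 this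
  set ψ₁ := chordEnvelope (fun n => r₀ * 2 ^ n) b
  refine ⟨ψ₁, fun r hr => ?_,
    concaveOn_chordEnvelope_two_pow hr₀ hb hc₁ hc hbgrowth, C * c₂, by positivity, fun r hr => ?_⟩
  · obtain ⟨k, -, -, hk, -⟩ := exists_chordEnvelope_two_pow_mem_Icc hr₀ hb hc₁ hc hbgrowth hr
    exact (hb k).trans_le hk
  obtain ⟨k, h₁, h₂, hk₁, hk₂⟩ := exists_chordEnvelope_two_pow_mem_Icc hr₀ hb hc₁ hc hbgrowth hr
  have hxk : 0 < r₀ * 2 ^ k := by positivity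
  have hψ := hcomp _ (hr₀b k) (r / (r₀ * 2 ^ k))
    ⟨(one_le_div hxk).2 h₁, (div_le_iff₀ hxk).2 (by linarith)⟩
  rw [div_mul_cancel₀ r hxk.ne'] at hψ
  have hψ₁ := (hb k).trans_le hk₁
  rw [div_le_iff₀ hψ₁, div_le_iff₀ (hpos r hr)]
  constructor
  · calc ψ r ≤ C * ψ₁ r := hψ.1.trans (by gcongr)
      _ ≤ C * c₂ * ψ₁ r := by
        gcongr
        exact le_mul_of_one_le_right (by positivity) hc₂
  · calc ψ₁ r ≤ c₂ * b k := hk₂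
      _ ≤ c₂ * (C * ψ r) := by gcongr; exact hψ.2
      _ = C * c₂ * ψ r := by ring

theorem mem_Ioo_of_dist_div_lt {a c w P Q ε : ℝ} (hQ : 0 < Q) (hw : w ∈ Icc a c)
    (h : dist w (P / Q) < ε) : P ∈ Ioo ((a - ε) * Q) ((c + ε) * Q) := by
  rw [dist_comm, Real.dist_eq, abs_sub_lt_iff] at h
  constructor
  · rw [← lt_div_iff₀ hQ]; linarith [hw.1]
  · rw [← div_lt_iff₀ hQ]; linarith [hw.2]

theorem Real.rpow_mem_Icc_one {v c θ : ℝ} (hv : v ∈ Icc 1 c) (hθ0 : 0 ≤ θ) (hθ1 : θ ≤ 1) :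
    v ^ θ ∈ Icc 1 c :=
  ⟨Real.one_le_rpow hv.1 hθ0, (Real.rpow_le_self_of_one_le hv.1 hθ1).trans hv.2⟩

open MeasureTheory in
theorem Icc_one_two_diff_union_preimage_nonempty {t t' : Set ℝ}
    (ht : volume t ≤ ENNReal.ofReal (1 / 4)) (ht' : volume t' ≤ ENNReal.ofReal (1 / 4))
    {U : ℝ} (hU : 1 ≤ U) : (Icc (1 : ℝ) 2 \ (t ∪ (· * U) ⁻¹' t')).Nonempty := by
  rw [nonempty_iff_ne_empty, Ne, sdiff_eq_empty]
  intro hcover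
  have hUpos : 0 < U := one_pos.trans_le hU
  have hpre : volume ((· * U) ⁻¹' t') ≤ ENNReal.ofReal (1 / 4) := by
    rw [Real.volume_preimage_mul_right hUpos.ne', abs_of_pos (inv_pos.2 hUpos)]
    exact (mul_le_of_le_one_left' (ENNReal.ofReal_le_one.2 (inv_le_one_of_one_le₀ hU))).trans ht'
  have := (measure_mono hcover).trans ((measure_union_le _ _).trans (add_le_add ht hpre))
  rw [Real.volume_Icc, ← ENNReal.ofReal_add (by norm_num) (by norm_num),
    ENNReal.ofReal_le_ofReal_iff (by norm_num)] at this
  norm_num at this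

section RegularVariation

variable {ψ : ℝ → ℝ} {θ : ℝ}

open MeasureTheory in
theorem exists_tendstoUniformlyOn_Icc_diff (hmeas : Measurable ψ)
    (hreg : ∀ l : ℝ, 0 < l → Tendsto (fun r : ℝ => ψ (l * r) / ψ r) atTop (nhds (l ^ θ)))
    {ρ : ℕ → ℝ} (hρ : Tendsto ρ atTop atTop) {a : ℝ} (ha : 0 < a) (c : ℝ) {ε : ℝ}
    (hε : 0 < ε) :
    ∃ t, volume t ≤ ENNReal.ofReal ε ∧
      TendstoUniformlyOn (fun n v => ψ (v * ρ n) / ψ (ρ n)) (fun v => v ^ θ) atTop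
        (Icc a c \ t) := by
  obtain ⟨t, -, -, ht, hunif⟩ := tendstoUniformlyOn_of_ae_tendsto
    (fun n => ((hmeas.comp (measurable_id.mul_const _)).div_const _).stronglyMeasurable)
    (measurable_id.pow_const θ).stronglyMeasurable (measurableSet_Icc (a := a) (b := c))
    (by rw [Real.volume_Icc]; exact ENNReal.ofReal_ne_top)
    (ae_of_all _ fun v hv => (hreg v (ha.trans_le hv.1)).comp hρ) hε
  exact ⟨t, ht, hunif⟩

variable (hθ0 : 0 < θ) (hθ1 : θ < 1) (hmeas : Measurable ψ) (hpos : ∀ r : ℝ, 0 < r → 0 < ψ r)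
  (hreg : ∀ l : ℝ, 0 < l → Tendsto (fun r : ℝ => ψ (l * r) / ψ r) atTop (nhds (l ^ θ)))
include hθ0 hθ1 hmeas hpos hreg

theorem eventually_comparable_mul_of_tendsto_atTop {ρ u : ℕ → ℝ}
    (hρ : Tendsto ρ atTop atTop) (hu : ∀ n, u n ∈ Icc (1 : ℝ) 2) :
    ∀ᶠ n in atTop, ψ (u n * ρ n) ≤ 9 * ψ (ρ n) ∧ ψ (ρ n) ≤ 9 * ψ (u n * ρ n) := by
  have huρ : Tendsto (fun n => u n * ρ n) atTop atTop := tendsto_atTop_mono' _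
    ((hρ.eventually_ge_atTop 0).mono fun n hn => le_mul_of_one_le_left hn (hu n).1) hρ
  obtain ⟨t, ht, hunif⟩ := exists_tendstoUniformlyOn_Icc_diff hmeas hreg hρ one_pos 4
    (ε := 1 / 4) (by norm_num)
  obtain ⟨t', ht', hunif'⟩ := exists_tendstoUniformlyOn_Icc_diff hmeas hreg huρ one_pos 2
    (ε := 1 / 4) (by norm_num)
  -- a point `s` outside both exceptional sets compares `ψ (ρ n)` and `ψ (u n * ρ n)` with
  -- `ψ (s * u n * ρ n)`
  rw [Metric.tendstoUniformlyOn_iff] at hunif hunif'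
  filter_upwards [hunif _ one_half_pos, hunif' _ one_half_pos, hρ.eventually_gt_atTop 0]
    with n hn hn' hρn
  obtain ⟨s, hs, hst⟩ := Icc_one_two_diff_union_preimage_nonempty ht' ht (hu n).1
  rw [mem_union, not_or, mem_preimage] at hst
  have hsu : s * u n ∈ Icc (1 : ℝ) 4 :=
    ⟨one_le_mul_of_one_le_of_one_le hs.1 (hu n).1, by nlinarith [hs.1, hs.2, (hu n).1, (hu n).2]⟩
  have h := mem_Ioo_of_dist_div_lt (hpos _ hρn) (Real.rpow_mem_Icc_one hsu hθ0.le hθ1.le)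
    (hn _ ⟨hsu, hst.2⟩)
  have h' := mem_Ioo_of_dist_div_lt (hpos _ (by positivity [(hu n).1]))
    (Real.rpow_mem_Icc_one hs hθ0.le hθ1.le) (hn' _ ⟨hs, hst.1⟩)
  rw [← mul_assoc] at h'
  constructor <;> nlinarith [h.1, h.2, h'.1, h'.2]

theorem exists_forall_comparable_mul :
    ∃ R₀, ∀ r, R₀ ≤ r → ∀ u ∈ Icc (1 : ℝ) 2, ψ (u * r) ≤ 9 * ψ r ∧ ψ r ≤ 9 * ψ (u * r) := by
  by_contra h
  have hbad : ∀ n : ℕ, ∃ r, (n : ℝ) ≤ r ∧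
      ∃ u ∈ Icc (1 : ℝ) 2, ¬(ψ (u * r) ≤ 9 * ψ r ∧ ψ r ≤ 9 * ψ (u * r)) := by
    intro n
    by_contra hn
    push Not at hn
    exact h ⟨n, hn⟩
  choose ρ hρ u hu hbad using hbad
  obtain ⟨n, hn⟩ := (eventually_comparable_mul_of_tendsto_atTop hθ0 hθ1 hmeas hpos hreg
    (tendsto_atTop_mono hρ tendsto_natCast_atTop_atTop) hu).exists
  exact hbad n hn

end RegularVariation

theorem exists_growth_constants {q : ℝ} (hq₁ : 1 < q) (hq₂ : q < 2) :
    ∃ c₁ c₂, 1 < c₁ ∧ c₁ < q ∧ q < c₂ ∧ c₁ * (c₂ - 1) ≤ 2 * (c₁ - 1) := by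
  have hδ : 0 < (q - 1) * (2 - q) := mul_pos (sub_pos.2 hq₁) (sub_pos.2 hq₂)
  -- with `δ = (q - 1) * (2 - q) / 3`, one gets `c₁ * (c₂ - 1) - 2 * (c₁ - 1) = -δ ^ 2`
  refine ⟨q - (q - 1) * (2 - q) / 3, q + (q - 1) * (2 - q) / 3, ?_, ?_, ?_, ?_⟩ <;> nlinarith

theorem eventually_mul_le_and_le_mul {ψ : ℝ → ℝ} (hpos : ∀ r : ℝ, 0 < r → 0 < ψ r) {q c₁ c₂ : ℝ}
    (h : Tendsto (fun r => ψ (2 * r) / ψ r) atTop (nhds q)) (hc₁ : c₁ < q) (hc₂ : q < c₂) :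
    ∀ᶠ r in atTop, c₁ * ψ r ≤ ψ (2 * r) ∧ ψ (2 * r) ≤ c₂ * ψ r := by
  filter_upwards [h (Ioo_mem_nhds hc₁ hc₂), eventually_gt_atTop 0] with r hr hr₀
  exact ⟨((lt_div_iff₀ (hpos r hr₀)).1 hr.1).le, ((div_lt_iff₀ (hpos r hr₀)).1 hr.2).le⟩

theorem stmt_8_general (ψ : ℝ → ℝ) (θ : ℝ) (hθ0 : 0 < θ) (hθ1 : θ < 1)
    (hmeas : Measurable ψ)
    (hpos : ∀ r : ℝ, 0 < r → 0 < ψ r)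
    (hreg : ∀ l : ℝ, 0 < l →
      Tendsto (fun r : ℝ => ψ (l * r) / ψ r) atTop (nhds (l ^ θ))) :
    ∃ R : ℝ, 0 < R ∧ ∃ ψ₁ : ℝ → ℝ,
      (∀ r : ℝ, R ≤ r → 0 < ψ₁ r) ∧
      ConcaveOn ℝ (Set.Ici R) ψ₁ ∧
      ∃ C : ℝ, 0 < C ∧ ∀ r : ℝ, R ≤ r →
        ψ r / ψ₁ r ≤ C ∧ ψ₁ r / ψ r ≤ C := by
  obtain ⟨R₀, hR₀⟩ := exists_forall_comparable_mul hθ0 hθ1 hmeas hpos hreg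
  have hq₁ : 1 < (2 : ℝ) ^ θ := Real.one_lt_rpow one_lt_two hθ0
  have hq₂ : (2 : ℝ) ^ θ < 2 := by
    simpa using Real.rpow_lt_rpow_of_exponent_lt one_lt_two hθ1
  obtain ⟨c₁, c₂, hc₁, hc₁q, hqc₂, hc⟩ := exists_growth_constants hq₁ hq₂
  obtain ⟨R₁, hR₁⟩ :=
    eventually_atTop.1 (eventually_mul_le_and_le_mul hpos (hreg 2 two_pos) hc₁q hqc₂)
  have hr₀ : 0 < max (max R₀ R₁) 1 := by positivity
  obtain ⟨ψ₁, hψ₁⟩ := exists_concaveOn_comparable_of_growth hr₀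
    (fun r hr => hpos r (hr₀.trans_le hr))
    (fun r hr => hR₀ r ((le_max_left _ _).trans ((le_max_left _ _).trans hr))) hc₁ hc
    (fun r hr => hR₁ r ((le_max_right _ _).trans ((le_max_left _ _).trans hr)))
  exact ⟨_, hr₀, ψ₁, hψ₁⟩

/-- If ψ ∈ B varies regularly of index θ ∈ (0,1) at infinity, then ψ is
pseudoconcave in a neighbourhood of infinity: there are R and a positive concave
function ψ₁ on [R,∞) such that ψ/ψ₁ and ψ₁/ψ are bounded there. -/
theorem stmt_8 (ψ : ℝ → ℝ) (θ : ℝ) (hθ0 : 0 < θ) (hθ1 : θ < 1)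
    (hmeas : Measurable ψ)
    (hpos : ∀ r : ℝ, 0 < r → 0 < ψ r)
    (hbdd : ∀ a b : ℝ, 0 < a → a ≤ b → ∃ C : ℝ, ∀ r ∈ Set.Icc a b, ψ r ≤ C)
    (hinv : ∀ a : ℝ, 0 < a → ∃ C : ℝ, ∀ r : ℝ, a ≤ r → (ψ r)⁻¹ ≤ C)
    (hreg : ∀ l : ℝ, 0 < l →
      Tendsto (fun r : ℝ => ψ (l * r) / ψ r) atTop (nhds (l ^ θ))) :
    ∃ R : ℝ, 0 < R ∧ ∃ ψ₁ : ℝ → ℝ,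
      (∀ r : ℝ, R ≤ r → 0 < ψ₁ r) ∧
      ConcaveOn ℝ (Set.Ici R) ψ₁ ∧
      ∃ C : ℝ, 0 < C ∧ ∀ r : ℝ, R ≤ r →
        ψ r / ψ₁ r ≤ C ∧ ψ₁ r / ψ r ≤ C :=
  stmt_8_general ψ θ hθ0 hθ1 hmeas hpos hreg
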